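/- arXiv:1204.5929 — 3 statements merged into one kernel-verified Lean document; each statement's English description precedes it below -/
import Mathlib

section
/- Every rooted binary tree Y with n ≥ 1 vertices can be transformed into the complete right chain on n vertices (the tree in which all n vertices are linked by right-child pointers) by a sequence of exactly R_Y − 1 direct chain rotations, where R_Y is the number of maximal right chains of Y. -/
/-- Rooted binary trees with vertices labeled by `α`: each vertex has an optional
left child and an optional right child; `nil` denotes the absent (empty) tree. -/
inductive BT (α : Type) : Type
  | nil : BT α
  | node : BT α → α → BT α → BT α

namespace BT

variable {α : Type}

/-- The number of vertices of a tree. -/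
def size : BT α → ℕ
  | nil => 0
  | node l _ r => size l + size r + 1

/-- The in-order (infix) traversal sequence of the labels of a tree:
left subtree first, then the root, then the right subtree. -/
def inorder : BT α → List α
  | nil => []
  | node l x r => inorder l ++ x :: inorder r

/-- The number of vertices of the tree having a (non-null) right child. -/
def rightChildCount : BT α → ℕ
  | nil => 0
  | node l _ nil => rightChildCount l
  | node l _ (node rl y rr) => rightChildCount l + rightChildCount (node rl y rr) + 1

/-- The number of vertices of the tree having a (non-null) left child. -/
def leftChildCount : BT α → ℕ
  | nil => 0
  | node nil _ r => leftChildCount r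
  | node (node ll y lr) _ r => leftChildCount (node ll y lr) + leftChildCount r + 1

/-- `L T`: the number of maximal left chains of `T`.  A left chain is a sequence of
vertices each linked to the next by a left-child pointer (a single vertex is a chain);
a maximal left chain is one not contained in any other left chain.  Each maximal left
chain is uniquely determined by its topmost vertex, which is either the root of the
tree or a right child of some vertex; moreover the maximal left chain headed by the
root of a nonempty left subtree `l` merges with its parent, which yields the
recursion below. -/
def L : BT α → ℕ
  | nil => 0
  | node nil _ r => 1 + L r
  | node (node ll y lr) _ r => L (node ll y lr) + L r

/-- `R T`: the number of maximal right chains of `T` (mirror image of `L`). -/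
def R : BT α → ℕ
  | nil => 0
  | node l _ nil => R l + 1
  | node l _ (node rl y rr) => R l + R (node rl y rr)

/-- The complete left chain on `n` vertices: the tree in which all `n` vertices are
linked by left-child pointers. -/
def leftChain : ℕ → BT Unit
  | 0 => nil
  | n + 1 => node (leftChain n) () nil

/-- The complete right chain on `n` vertices: the tree in which all `n` vertices are
linked by right-child pointers. -/
def rightChain : ℕ → BT Unit
  | 0 => nil
  | n + 1 => node nil () (rightChain n)

/-- `SpliceL A w U V lv` captures the local effect of the direct chain rotation
`rot([u-v], w)` for a **left** chain `[u-v]`: here `U` is the subtree rooted at `u`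
(`u` being the right child of `w`), `A` is the left subtree of `w` and `w` is its
label, `[u-v]` is the left chain going from `u` down (along left-child pointers) to
`v` inside `U`, `lv` is the former left subtree of `v`, and `V` is the tree replacing
the subtree `node A w U` rooted at `w`: the vertex `u` takes the place of `w`, `w`
becomes the left child of `v`, and the former left subtree `lv` of `v` (if any)
becomes the right subtree of `w`.  The chain `[u-v]` is maximal iff `lv = nil`. -/
inductive SpliceL (A : BT α) (w : α) : BT α → BT α → BT α → Prop
  | base (lv rv : BT α) (v : α) :
      SpliceL A w (node lv v rv) (node (node A w lv) v rv) lv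
  | step {lu lu' lv : BT α} (c : α) (ru : BT α) :
      SpliceL A w lu lu' lv → SpliceL A w (node lu c ru) (node lu' c ru) lv

/-- `SpliceR A w U V rv`: mirror image of `SpliceL`, i.e. the local effect of the
direct chain rotation `rot([u-v], w)` for a **right** chain `[u-v]`: `U` is the
subtree rooted at `u` (`u` being the left child of `w`), `A` is the right subtree of
`w`, `[u-v]` is the right chain from `u` down to `v` inside `U`, `rv` is the former
right subtree of `v`, and `V` replaces the subtree `node U w A` rooted at `w`: `u`
takes the place of `w`, `w` becomes the right child of `v`, and the former right
subtree `rv` of `v` (if any) becomes the left subtree of `w`.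
The chain `[u-v]` is maximal iff `rv = nil`. -/
inductive SpliceR (A : BT α) (w : α) : BT α → BT α → BT α → Prop
  | base (lv rv : BT α) (v : α) :
      SpliceR A w (node lv v rv) (node lv v (node rv w A)) rv
  | step {ru ru' rv : BT α} (lu : BT α) (c : α) :
      SpliceR A w ru ru' rv → SpliceR A w (node lu c ru) (node lu c ru') rv

/-- `Ctx Y Y' W W'`: the tree `Y'` is obtained from `Y` by replacing one occurrence
of the subtree `W`, rooted at some vertex of `Y` (or `Y` itself), by the tree `W'`. -/
inductive Ctx : BT α → BT α → BT α → BT α → Prop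
  | refl (W W' : BT α) : Ctx W W' W W'
  | left {l l' W W' : BT α} (x : α) (r : BT α) :
      Ctx l l' W W' → Ctx (node l x r) (node l' x r) W W'
  | right {r r' W W' : BT α} (l : BT α) (x : α) :
      Ctx r r' W W' → Ctx (node l x r) (node l x r') W W'

/-- `Y'` is obtained from `Y` by one **direct** chain rotation `rot([u-v], w)`,
performed either on a left chain or (symmetrically) on a right chain, at an arbitrary
vertex `w` of `Y`. -/
def DirectRot (Y Y' : BT α) : Prop :=
  (∃ A w U V lv, SpliceL A w U V lv ∧ Ctx Y Y' (node A w U) V) ∨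
  (∃ A w U V rv, SpliceR A w U V rv ∧ Ctx Y Y' (node U w A) V)

/-- `IChainL A w B X X'` captures the data of the inverse chain rotation
`rot(w, [u-v])` for a **left** chain `[u-v]`: `X` is the subtree rooted at `u`,
`[u-v]` is the left chain from `u` down to `v` inside `X`, and the vertex `w` (with
label `w`, left subtree `A` and right subtree `B`) is the left child of `v`; `X'` is
`X` with the left child `w` of `v` replaced by `B` (the former right subtree of `w`
becomes the left subtree of `v`).  The rotation replaces the subtree `X` by
`node A w X'`: `w` takes the place of `u` and `u` becomes the right child of `w`. -/
inductive IChainL (A : BT α) (w : α) (B : BT α) : BT α → BT α → Prop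
  | base (v : α) (rv : BT α) :
      IChainL A w B (node (node A w B) v rv) (node B v rv)
  | step {lu lu' : BT α} (c : α) (ru : BT α) :
      IChainL A w B lu lu' → IChainL A w B (node lu c ru) (node lu' c ru)

/-- `IChainR B w A X X'`: mirror image of `IChainL`, for the inverse chain rotation
`rot(w, [u-v])` on a **right** chain `[u-v]`: `X` is the subtree rooted at `u`, the
vertex `w` (with left subtree `B` and right subtree `A`) is the right child of `v`;
`X'` is `X` with the right child `w` of `v` replaced by `B`.  The rotation replaces
`X` by `node X' w A`: `w` takes the place of `u` and `u` becomes the left child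
of `w`. -/
inductive IChainR (B : BT α) (w : α) (A : BT α) : BT α → BT α → Prop
  | base (v : α) (lv : BT α) :
      IChainR B w A (node lv v (node B w A)) (node lv v B)
  | step {ru ru' : BT α} (lu : BT α) (c : α) :
      IChainR B w A ru ru' → IChainR B w A (node lu c ru) (node lu c ru')

/-- `Y'` is obtained from `Y` by one **inverse** chain rotation `rot(w, [u-v])`,
performed either on a left chain or (symmetrically) on a right chain, anywhere
in `Y`. -/
def InvRot (Y Y' : BT α) : Prop :=
  (∃ A w B X X', IChainL A w B X X' ∧ Ctx Y Y' X (node A w X')) ∨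
  (∃ B w A X X', IChainR B w A X X' ∧ Ctx Y Y' X (node X' w A))

/-- One chain rotation (c-rotation), direct or inverse. -/
def CStep (Y Y' : BT α) : Prop := DirectRot Y Y' ∨ InvRot Y Y'

/-- `ReachIn k S T`: `S` can be transformed into `T` by a sequence of exactly `k`
chain rotations (each direct or inverse). -/
def ReachIn : ℕ → BT α → BT α → Prop
  | 0 => fun S T => S = T
  | k + 1 => fun S T => ∃ Y, CStep S Y ∧ ReachIn k Y T

/-- `DReachIn k S T`: `S` can be transformed into `T` by a sequence of exactly `k`
**direct** chain rotations. -/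
def DReachIn : ℕ → BT α → BT α → Prop
  | 0 => fun S T => S = T
  | k + 1 => fun S T => ∃ Y, DirectRot S Y ∧ DReachIn k Y T

/-- The chain distance `C(S,T)`: the minimum number of chain rotations (direct or
inverse) needed to transform `S` into `T`. -/
noncomputable def chainDist (S T : BT α) : ℕ := sInf {k | ReachIn k S T}

end BT

namespace BT

attribute [local instance] Classical.propDecidable

lemma R_node (l : BT α) (x : α) (r : BT α) :
    R (node l x r) = R l + (if r = nil then 1 else R r) := by
  cases r <;> simp [R]

lemma size_pos {Y : BT α} (h : Y ≠ nil) : 1 ≤ size Y := by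
  cases Y with
  | nil => exact absurd rfl h
  | node l x r => simp [size]

lemma ne_nil_of_size {Y : BT α} (h : 1 ≤ size Y) : Y ≠ nil := by
  cases Y with
  | nil => simp [size] at h
  | node l x r => exact fun h' => by cases h'

lemma R_pos {Y : BT α} (h : Y ≠ nil) : 1 ≤ R Y := by
  induction Y with
  | nil => exact absurd rfl h
  | node l x r ihl ihr =>
    rw [R_node]
    by_cases hr : r = nil
    · simp [hr]
    · have := ihr hr; simp [hr]; omega

lemma spliceR_exists (A : BT α) (w : α) :
    ∀ U : BT α, U ≠ nil → ∃ V, SpliceR A w U V nil := by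
  intro U
  induction U with
  | nil => intro h; exact absurd rfl h
  | node lu c ru ihl ihr =>
    intro _
    cases ru with
    | nil => exact ⟨_, SpliceR.base lu nil c⟩
    | node rl y rr =>
      obtain ⟨V, hV⟩ := ihr (fun h => by cases h)
      exact ⟨_, SpliceR.step lu c hV⟩

lemma spliceR_ne_nil {A : BT α} {w : α} {U V rv : BT α}
    (h : SpliceR A w U V rv) : V ≠ nil := by
  cases h <;> exact fun h' => by cases h'

lemma spliceR_src_ne_nil {A : BT α} {w : α} {U V rv : BT α}
    (h : SpliceR A w U V rv) : U ≠ nil := by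
  cases h <;> exact fun h' => by cases h'

lemma spliceR_size {A : BT α} {w : α} {U V rv : BT α}
    (h : SpliceR A w U V rv) : size V = size (node U w A) := by
  induction h with
  | base lv rv v => simp [size]; omega
  | step lu c h ih => simp [size] at *; omega

lemma spliceR_R {A : BT α} {w : α} {U V rv : BT α}
    (h : SpliceR A w U V rv) :
    R V + (if rv = nil then 1 else R rv) = R (node U w A) + R rv := by
  induction h with
  | base lv rv v =>
    have h1 : R (node (node lv v rv) w A) = (R lv + (if rv = nil then 1 else R rv))
        + (if A = nil then 1 else R A) := by rw [R_node, R_node]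
    have h2 : R (node lv v (node rv w A)) = R lv + (R rv + (if A = nil then 1 else R A)) := by
      rw [R_node, R_node]; simp
    rw [h1, h2]; by_cases hrv : rv = nil <;> simp [hrv] <;> omega
  | step lu c h ih =>
    rename_i ru ru' rv
    have hru : ru ≠ nil := spliceR_src_ne_nil h
    have hru' : ru' ≠ nil := spliceR_ne_nil h
    have e1 : R (node (node lu c ru) w A) = R lu + R (node ru w A) := by
      rw [R_node, R_node, R_node]; simp [hru]; omega
    have e2 : R (node lu c ru') = R lu + R ru' := by rw [R_node]; simp [hru']
    omega

lemma ctx_ne₁ {Y Y' W W' : BT α} (h : Ctx Y Y' W W') (hW : W ≠ nil) : Y ≠ nil := by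
  cases h with
  | refl => exact hW
  | left x r _ => exact fun h' => by cases h'
  | right l x _ => exact fun h' => by cases h'

lemma ctx_ne₂ {Y Y' W W' : BT α} (h : Ctx Y Y' W W') (hW : W' ≠ nil) : Y' ≠ nil := by
  cases h with
  | refl => exact hW
  | left x r _ => exact fun h' => by cases h'
  | right l x _ => exact fun h' => by cases h'

lemma ctx_size {Y Y' W W' : BT α} (h : Ctx Y Y' W W') (hs : size W' = size W) :
    size Y' = size Y := by
  induction h with
  | refl => exact hs
  | left x r _ ih => simp [size]; omega
  | right l x _ ih => simp [size]; omega

lemma ctx_R {Y Y' W W' : BT α} (h : Ctx Y Y' W W') : W ≠ nil → W' ≠ nil →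
    R W' + 1 = R W → R Y' + 1 = R Y := by
  induction h with
  | refl => exact fun _ _ hR => hR
  | left x r hc ih =>
    intro hW hW' hR
    have := ih hW hW' hR
    rw [R_node, R_node]; omega
  | right l x hc ih =>
    intro hW hW' hR
    have h1 := ih hW hW' hR
    have hr := ctx_ne₁ hc hW
    have hr' := ctx_ne₂ hc hW'
    rw [R_node, R_node, if_neg hr, if_neg hr']; omega

lemma spliceR_R_nil {A : BT α} {w : α} {U V : BT α}
    (h : SpliceR A w U V nil) : R V + 1 = R (node U w A) := by
  have h1 := spliceR_R h
  have h0 : R (nil : BT α) = 0 := rfl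
  rw [if_pos rfl] at h1
  omega

lemma directRot_right {l : BT α} {x : α} {r r' : BT α} (h : DirectRot r r') :
    DirectRot (node l x r) (node l x r') := by
  rcases h with ⟨A, w, U, V, lv, hs, hc⟩ | ⟨A, w, U, V, rv, hs, hc⟩
  · exact Or.inl ⟨A, w, U, V, lv, hs, Ctx.right l x hc⟩
  · exact Or.inr ⟨A, w, U, V, rv, hs, Ctx.right l x hc⟩

lemma step_exists : ∀ Y : BT Unit, Y ≠ nil → 2 ≤ R Y →
    ∃ Y', DirectRot Y Y' ∧ R Y' + 1 = R Y ∧ size Y' = size Y := by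
  intro Y
  induction Y with
  | nil => intro h; exact absurd rfl h
  | node l x r ihl ihr =>
    intro _ hR
    cases l with
    | nil =>
      have hr : r ≠ nil := by
        intro h; subst h; simp [R] at hR
      have hRr : R (node nil x r) = R r := by rw [R_node]; simp [hr, R]
      obtain ⟨r', hd, hR', hs'⟩ := ihr hr (by omega)
      have hr' : r' ≠ nil := ne_nil_of_size (by rw [hs']; exact size_pos hr)
      refine ⟨node nil x r', directRot_right hd, ?_, ?_⟩
      · rw [R_node, hRr]; simp [hr', R]; omega
      · simp [size]; omega
    | node ll y lr =>
      obtain ⟨V, hV⟩ := spliceR_exists r x (node ll y lr) (fun h => by cases h)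
      refine ⟨V, Or.inr ⟨r, x, node ll y lr, V, nil, hV, Ctx.refl _ _⟩, ?_, ?_⟩
      · exact spliceR_R_nil hV
      · exact spliceR_size hV

lemma eq_rightChain_of_R_one : ∀ Y : BT Unit, Y ≠ nil → R Y = 1 →
    Y = rightChain (size Y) := by
  intro Y
  induction Y with
  | nil => intro h; exact absurd rfl h
  | node l x r ihl ihr =>
    intro _ hR
    have hl : l = nil := by
      by_contra hl
      have h1 := R_pos hl
      rw [R_node] at hR
      by_cases hr : r = nil
      · simp [hr] at hR; omega
      · have := R_pos hr; simp [hr] at hR; omega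
    subst hl
    cases r with
    | nil => simp [size, rightChain]
    | node rl y rr =>
      have hr : (node rl y rr : BT Unit) ≠ nil := fun h => by cases h
      have hRr : R (node rl y rr : BT Unit) = 1 := by
        rw [R_node] at hR; simpa [hr, R] using hR
      have h1 := ihr hr hRr
      have hsz : size (node (nil : BT Unit) x (node rl y rr)) = size (node rl y rr) + 1 := by
        simp [size]
      rw [hsz, rightChain, ← h1]

lemma to_rightChain_aux : ∀ k Y, R Y ≤ k → Y ≠ (nil : BT Unit) →
    DReachIn (R Y - 1) Y (rightChain (size Y)) := by
  intro k
  induction k with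
  | zero => intro Y hk hY; exact absurd hk (by have := R_pos hY; omega)
  | succ k ih =>
    intro Y hk hY
    rcases Nat.lt_or_ge (R Y) 2 with h2 | h2
    · have h1 : R Y = 1 := by have := R_pos hY; omega
      rw [h1]
      show Y = rightChain (size Y)
      exact eq_rightChain_of_R_one Y hY h1
    · obtain ⟨Y', hd, hR', hs'⟩ := step_exists Y hY h2
      have hY' : Y' ≠ nil := ne_nil_of_size (by rw [hs']; exact size_pos hY)
      have := ih Y' (by omega) hY'
      rw [hs'] at this
      have hk' : R Y - 1 = (R Y' - 1) + 1 := by omega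
      rw [hk']
      exact ⟨Y', hd, this⟩

end BT

open BT

/-- every rooted binary tree `Y` with `n ≥ 1` vertices can be transformed
into the complete right chain on `n` vertices by a sequence of exactly `R_Y − 1`
direct chain rotations. -/
theorem to_complete_right_chain (Y : BT Unit) (n : ℕ) (hn : 1 ≤ n) (hY : Y.size = n) :
    DReachIn (Y.R - 1) Y (rightChain n) := by
  subst hY
  exact to_rightChain_aux (R Y) Y le_rfl (ne_nil_of_size hn)
end

section
/- For any two rooted binary trees S and T with the same number n of vertices, the chain distance satisfies C(S,T) ≤ min(L_S + L_T − 2, R_S + R_T − 2), where L_Y and R_Y denote the number of maximal left chains and maximal right chains of a tree Y. -/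
open BT

section Aux
namespace BT
variable {α : Type}

/-- Mirror image of a tree. -/
def mirror : BT α → BT α
  | nil => nil
  | node l x r => node (mirror r) x (mirror l)

lemma mirror_mirror (t : BT α) : mirror (mirror t) = t := by
  induction t with
  | nil => rfl
  | node l x r ihl ihr => simp [mirror, ihl, ihr]

lemma size_mirror (t : BT α) : (mirror t).size = t.size := by
  induction t with
  | nil => rfl
  | node l x r ihl ihr => simp [mirror, size, ihl, ihr]; omega

lemma L_mirror (t : BT α) : (mirror t).L = t.R := by
  induction t with
  | nil => rfl
  | node l x r ihl ihr =>
    cases r with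
    | nil => simp [mirror, L, R, ihl, ihr]; omega
    | node rl y rr =>
      simp only [mirror, L, R] at *
      omega

lemma size_eq_zero_iff (t : BT α) : t.size = 0 ↔ t = nil := by
  cases t <;> simp [size]

lemma L_pos {t : BT α} (h : t ≠ nil) : 1 ≤ t.L := by
  induction t with
  | nil => exact absurd rfl h
  | node l x r ihl ihr =>
    cases l with
    | nil => simp only [L]; omega
    | node ll y lr => have := ihl (by simp); simp only [L]; omega

lemma L_eq_one (t : BT Unit) (h : t.L = 1) : t = leftChain t.size := by
  induction t with
  | nil => simp [L] at h
  | node l x r ihl ihr =>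
    cases l with
    | nil =>
      simp only [L] at h
      have hr : r.L = 0 := by omega
      have : r = nil := by
        by_contra hne; have := L_pos hne; omega
      subst this
      simp [size, leftChain]
    | node ll y lr =>
      simp only [L] at h
      have h1 : 1 ≤ (node ll y lr).L := L_pos (by simp)
      have hr : r.L = 0 := by omega
      have hrn : r = nil := by
        by_contra hne; have := L_pos hne; omega
      subst hrn
      have hl := ihl (by omega)
      cases x
      rw [show ((node ll y lr).node () (nil : BT Unit)).size
          = (node ll y lr).size + 1 by simp [size]]
      show (node ll y lr).node () nil = node (leftChain (node ll y lr).size) () nil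
      rw [← hl]

lemma spliceL_V_ne_nil {A : BT α} {w : α} {U V lv : BT α}
    (h : SpliceL A w U V lv) : V ≠ nil := by
  cases h <;> simp

lemma spliceL_exists (A : BT α) (w : α) (U : BT α) (hU : U ≠ nil) :
    ∃ V, SpliceL A w U V nil ∧ V.size = (node A w U).size ∧ V.L + 1 = (node A w U).L := by
  induction U with
  | nil => exact absurd rfl hU
  | node lu c ru ihl ihr =>
    cases lu with
    | nil =>
      refine ⟨node (node A w nil) c ru, SpliceL.base nil ru c, by simp [size]; omega, ?_⟩
      cases A with
      | nil => simp only [L]; omega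
      | node al ax ar => simp only [L]; omega
    | node ll y lr =>
      obtain ⟨V, hs, hsize, hL⟩ := ihl (by simp)
      have hVne : V ≠ nil := spliceL_V_ne_nil hs
      refine ⟨node V c ru, SpliceL.step c ru hs, ?_, ?_⟩
      · simp only [size] at *; omega
      · cases V with
        | nil => exact absurd rfl hVne
        | node vl vx vr =>
          cases A with
          | nil => simp only [L] at *; omega
          | node al ax ar => simp only [L] at *; omega

lemma directRot_left {l l' : BT α} (x : α) (r : BT α)
    (h : DirectRot l l') : DirectRot (node l x r) (node l' x r) := by
  rcases h with ⟨A, w, U, V, lv, hs, hc⟩ | ⟨A, w, U, V, rv, hs, hc⟩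
  · exact Or.inl ⟨A, w, U, V, lv, hs, Ctx.left x r hc⟩
  · exact Or.inr ⟨A, w, U, V, rv, hs, Ctx.left x r hc⟩

lemma step_exists_s7 (S : BT α) (h : 2 ≤ S.L) :
    ∃ S', DirectRot S S' ∧ S'.size = S.size ∧ S'.L + 1 = S.L := by
  induction S with
  | nil => simp [L] at h
  | node l x r ihl ihr =>
    cases r with
    | node rl y rr =>
      obtain ⟨V, hs, hsize, hL⟩ := spliceL_exists l x (node rl y rr) (by simp)
      exact ⟨V, Or.inl ⟨l, x, node rl y rr, V, nil, hs, Ctx.refl _ _⟩, hsize, hL⟩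
    | nil =>
      cases l with
      | nil => simp [L] at h
      | node ll y lr =>
        have h2 : 2 ≤ (node ll y lr).L := by simp only [L] at h ⊢; omega
        obtain ⟨l', hrot, hsize, hL⟩ := ihl h2
        have hl'ne : l' ≠ nil := by
          intro hn
          rw [hn] at hsize
          simp only [size] at hsize
          omega
        refine ⟨node l' x nil, directRot_left x nil hrot, ?_, ?_⟩
        · simp only [size] at hsize ⊢; omega
        · cases l' with
          | nil => exact absurd rfl hl'ne
          | node a b c => simp only [L] at hL ⊢; omega

lemma dreach_aux : ∀ m (S : BT Unit), S.L ≤ m → S ≠ nil →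
    DReachIn (S.L - 1) S (leftChain S.size) := by
  intro m
  induction m with
  | zero => intro S h hne; have := L_pos hne; omega
  | succ m ih =>
    intro S h hne
    by_cases h1 : S.L = 1
    · rw [h1]
      have := L_eq_one S h1
      simpa [DReachIn] using this
    · have h2 : 2 ≤ S.L := by have := L_pos hne; omega
      obtain ⟨S', hrot, hsize, hL⟩ := step_exists_s7 S h2
      have hne' : S' ≠ nil := by
        intro hn; subst hn
        rw [(size_eq_zero_iff S).mp hsize.symm] at hne
        exact hne rfl
      have hr := ih S' (by omega) hne'
      have : S.L - 1 = (S'.L - 1) + 1 := by have := L_pos hne'; omega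
      rw [this]
      refine ⟨S', hrot, ?_⟩
      rwa [← hsize]

lemma dreach_chain (S : BT Unit) (hne : S ≠ nil) :
    DReachIn (S.L - 1) S (leftChain S.size) :=
  dreach_aux S.L S le_rfl hne

lemma dreach_reach : ∀ k (S T : BT α), DReachIn k S T → ReachIn k S T := by
  intro k
  induction k with
  | zero => intro S T h; exact h
  | succ k ih =>
    rintro S T ⟨Y, hd, hr⟩
    exact ⟨Y, Or.inl hd, ih Y T hr⟩

lemma ctx_symm {Y Y' W W' : BT α} (h : Ctx Y Y' W W') : Ctx Y' Y W' W := by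
  induction h with
  | refl => exact Ctx.refl _ _
  | left x r _ ih => exact Ctx.left x r ih
  | right l x _ ih => exact Ctx.right l x ih

lemma spliceL_iChainL {A : BT α} {w : α} {U V lv : BT α}
    (h : SpliceL A w U V lv) : IChainL A w lv V U := by
  induction h with
  | base lv rv v => exact IChainL.base v rv
  | step c ru _ ih => exact IChainL.step c ru ih

lemma iChainL_spliceL {A : BT α} {w : α} {B X X' : BT α}
    (h : IChainL A w B X X') : SpliceL A w X' X B := by
  induction h with
  | base v rv => exact SpliceL.base B rv v
  | step c ru _ ih => exact SpliceL.step c ru ih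

lemma spliceR_iChainR {A : BT α} {w : α} {U V rv : BT α}
    (h : SpliceR A w U V rv) : IChainR rv w A V U := by
  induction h with
  | base lv rv v => exact IChainR.base v lv
  | step lu c _ ih => exact IChainR.step lu c ih

lemma iChainR_spliceR {B : BT α} {w : α} {A X X' : BT α}
    (h : IChainR B w A X X') : SpliceR A w X' X B := by
  induction h with
  | base v lv => exact SpliceR.base lv B v
  | step lu c _ ih => exact SpliceR.step lu c ih

lemma cstep_symm {Y Y' : BT α} (h : CStep Y Y') : CStep Y' Y := by
  rcases h with (⟨A, w, U, V, lv, hs, hc⟩ | ⟨A, w, U, V, rv, hs, hc⟩) |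
    (⟨A, w, B, X, X', hs, hc⟩ | ⟨B, w, A, X, X', hs, hc⟩)
  · exact Or.inr (Or.inl ⟨A, w, lv, V, U, spliceL_iChainL hs, ctx_symm hc⟩)
  · exact Or.inr (Or.inr ⟨rv, w, A, V, U, spliceR_iChainR hs, ctx_symm hc⟩)
  · exact Or.inl (Or.inl ⟨A, w, X', X, B, iChainL_spliceL hs, ctx_symm hc⟩)
  · exact Or.inl (Or.inr ⟨A, w, X', X, B, iChainR_spliceR hs, ctx_symm hc⟩)

lemma reach_trans : ∀ a b (S Y T : BT α), ReachIn a S Y → ReachIn b Y T →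
    ReachIn (a + b) S T := by
  intro a
  induction a with
  | zero => intro b S Y T h1 h2; rw [show (0+b) = b by omega, show S = Y from h1]; exact h2
  | succ a ih =>
    rintro b S Y T ⟨Z, hs, hr⟩ h2
    rw [show (a + 1 + b) = (a + b) + 1 by omega]
    exact ⟨Z, hs, ih b Z Y T hr h2⟩

lemma reach_snoc : ∀ k (S Y T : BT α), ReachIn k S Y → CStep Y T →
    ReachIn (k + 1) S T := by
  intro k
  induction k with
  | zero => intro S Y T h1 h2; rw [show S = Y from h1]; exact ⟨T, h2, rfl⟩
  | succ k ih =>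
    rintro S Y T ⟨Z, hs, hr⟩ h2
    exact ⟨Z, hs, ih Z Y T hr h2⟩

lemma reach_symm : ∀ k (S T : BT α), ReachIn k S T → ReachIn k T S := by
  intro k
  induction k with
  | zero => intro S T h; exact (show S = T from h).symm
  | succ k ih =>
    rintro S T ⟨Y, hs, hr⟩
    exact reach_snoc k T Y S (ih Y T hr) (cstep_symm hs)

lemma ctx_mirror {Y Y' W W' : BT α} (h : Ctx Y Y' W W') :
    Ctx (mirror Y) (mirror Y') (mirror W) (mirror W') := by
  induction h with
  | refl => exact Ctx.refl _ _
  | left x r _ ih => exact Ctx.right (mirror r) x ih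
  | right l x _ ih => exact Ctx.left x (mirror l) ih

lemma spliceL_mirror {A : BT α} {w : α} {U V lv : BT α} (h : SpliceL A w U V lv) :
    SpliceR (mirror A) w (mirror U) (mirror V) (mirror lv) := by
  induction h with
  | base lv rv v => exact SpliceR.base (mirror rv) (mirror lv) v
  | step c ru _ ih => exact SpliceR.step (mirror ru) c ih

lemma spliceR_mirror {A : BT α} {w : α} {U V rv : BT α} (h : SpliceR A w U V rv) :
    SpliceL (mirror A) w (mirror U) (mirror V) (mirror rv) := by
  induction h with
  | base lv rv v => exact SpliceL.base (mirror rv) (mirror lv) v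
  | step lu c _ ih => exact SpliceL.step c (mirror lu) ih

lemma iChainL_mirror {A : BT α} {w : α} {B X X' : BT α} (h : IChainL A w B X X') :
    IChainR (mirror B) w (mirror A) (mirror X) (mirror X') := by
  induction h with
  | base v rv => exact IChainR.base v (mirror rv)
  | step c ru _ ih => exact IChainR.step (mirror ru) c ih

lemma iChainR_mirror {B : BT α} {w : α} {A X X' : BT α} (h : IChainR B w A X X') :
    IChainL (mirror A) w (mirror B) (mirror X) (mirror X') := by
  induction h with
  | base v lv => exact IChainL.base v (mirror lv)
  | step lu c _ ih => exact IChainL.step c (mirror lu) ih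

lemma cstep_mirror {Y Y' : BT α} (h : CStep Y Y') : CStep (mirror Y) (mirror Y') := by
  rcases h with (⟨A, w, U, V, lv, hs, hc⟩ | ⟨A, w, U, V, rv, hs, hc⟩) |
    (⟨A, w, B, X, X', hs, hc⟩ | ⟨B, w, A, X, X', hs, hc⟩)
  · exact Or.inl (Or.inr ⟨mirror A, w, mirror U, mirror V, mirror lv, spliceL_mirror hs,
      by simpa [mirror] using ctx_mirror hc⟩)
  · exact Or.inl (Or.inl ⟨mirror A, w, mirror U, mirror V, mirror rv, spliceR_mirror hs,
      by simpa [mirror] using ctx_mirror hc⟩)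
  · exact Or.inr (Or.inr ⟨mirror B, w, mirror A, mirror X, mirror X', iChainL_mirror hs,
      by simpa [mirror] using ctx_mirror hc⟩)
  · exact Or.inr (Or.inl ⟨mirror A, w, mirror B, mirror X, mirror X', iChainR_mirror hs,
      by simpa [mirror] using ctx_mirror hc⟩)

lemma reach_mirror : ∀ k (S T : BT α), ReachIn k S T →
    ReachIn k (mirror S) (mirror T) := by
  intro k
  induction k with
  | zero => intro S T h; rw [show S = T from h]; rfl
  | succ k ih =>
    rintro S T ⟨Y, hs, hr⟩
    exact ⟨mirror Y, cstep_mirror hs, ih Y T hr⟩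

lemma reach_bound (S T : BT Unit) (h : S.size = T.size) :
    ∃ k, ReachIn k S T ∧ k ≤ S.L + T.L - 2 := by
  by_cases hS : S = nil
  · subst hS
    have hT : T = nil := (size_eq_zero_iff T).mp (by simpa [size] using h.symm)
    subst hT
    exact ⟨0, rfl, by omega⟩
  · have hT : T ≠ nil := by
      intro hn; subst hn
      exact hS ((size_eq_zero_iff S).mp (by simpa [size] using h))
    have h1 := dreach_reach _ _ _ (dreach_chain S hS)
    have h2 := reach_symm _ _ _ (dreach_reach _ _ _ (dreach_chain T hT))
    rw [h] at h1
    refine ⟨(S.L - 1) + (T.L - 1), reach_trans _ _ _ _ _ h1 h2, ?_⟩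
    have := L_pos hS; have := L_pos hT; omega

end BT
end Aux

/-- for any two rooted binary trees `S` and `T` with the same number `n`
of vertices, `C(S,T) ≤ min(L_S + L_T − 2, R_S + R_T − 2)`. -/


theorem chainDist_le_min (S T : BT Unit) (n : ℕ) (hS : S.size = n) (hT : T.size = n) :
    chainDist S T ≤ min (S.L + T.L - 2) (S.R + T.R - 2) := by
  refine le_min ?_ ?_
  · obtain ⟨k, hr, hk⟩ := reach_bound S T (by omega)
    exact le_trans (Nat.sInf_le (show k ∈ {k | ReachIn k S T} from hr)) hk
  · obtain ⟨k, hr, hk⟩ := reach_bound (mirror S) (mirror T)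
      (by rw [size_mirror, size_mirror]; omega)
    have hr' : ReachIn k S T := by
      have := reach_mirror k _ _ hr
      rwa [mirror_mirror, mirror_mirror] at this
    rw [L_mirror, L_mirror] at hk
    exact le_trans (Nat.sInf_le (show k ∈ {k | ReachIn k S T} from hr')) hk
end

section
/- If a rooted binary tree Y' is obtained from a rooted binary tree Y by a single chain rotation (direct or inverse), then |L_{Y'} − L_Y| ≤ 1, where L_Y denotes the number of maximal left chains of Y. -/
namespace BT

variable {α : Type}

/-- Indicator of the empty tree. -/
def e : BT α → ℕ
  | nil => 1
  | node _ _ _ => 0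

lemma e_le_one (t : BT α) : e t ≤ 1 := by cases t <;> simp [e]

lemma L_node (l : BT α) (x : α) (r : BT α) :
    L (node l x r) = e l + L l + r.L := by
  cases l <;> simp [L, e]

lemma spliceL_L {A : BT α} {w : α} {U V lv : BT α} (h : SpliceL A w U V lv) :
    e U = 0 ∧ e V = 0 ∧ (V.L : ℤ) = e A + A.L + U.L - e lv := by
  induction h with
  | base lv rv v =>
    refine ⟨rfl, rfl, ?_⟩
    simp only [L_node, e]
    push_cast
    ring
  | step c ru h ih =>
    obtain ⟨h1, h2, h3⟩ := ih
    refine ⟨rfl, rfl, ?_⟩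
    simp only [L_node, h1, h2] at *
    push_cast at *
    linarith

lemma spliceR_L {A : BT α} {w : α} {U V rv : BT α} (h : SpliceR A w U V rv) :
    e U = 0 ∧ e V = 0 ∧ (V.L : ℤ) = U.L + A.L + e rv := by
  induction h with
  | base lv rv v =>
    refine ⟨rfl, rfl, ?_⟩
    simp only [L_node, e]
    push_cast
    ring
  | step lu c h ih =>
    obtain ⟨h1, h2, h3⟩ := ih
    refine ⟨rfl, rfl, ?_⟩
    simp only [L_node, h1, h2] at *
    push_cast at *
    linarith

lemma ichainL_L {A : BT α} {w : α} {B X X' : BT α} (h : IChainL A w B X X') :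
    e X = 0 ∧ e X' = 0 ∧ (X'.L : ℤ) = X.L - e A - A.L + e B := by
  induction h with
  | base v rv =>
    refine ⟨rfl, rfl, ?_⟩
    simp only [L_node, e]
    push_cast
    ring
  | step c ru h ih =>
    obtain ⟨h1, h2, h3⟩ := ih
    refine ⟨rfl, rfl, ?_⟩
    simp only [L_node, h1, h2] at *
    push_cast at *
    linarith

lemma ichainR_L {B : BT α} {w : α} {A X X' : BT α} (h : IChainR B w A X X') :
    e X = 0 ∧ e X' = 0 ∧ (X'.L : ℤ) = X.L - A.L - e B := by
  induction h with
  | base v lv =>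
    refine ⟨rfl, rfl, ?_⟩
    simp only [L_node, e]
    push_cast
    ring
  | step lu c h ih =>
    obtain ⟨h1, h2, h3⟩ := ih
    refine ⟨rfl, rfl, ?_⟩
    simp only [L_node, h1, h2] at *
    push_cast at *
    linarith

lemma ctx_L {Y Y' W W' : BT α} (h : Ctx Y Y' W W') (hW : e W = 0) (hW' : e W' = 0) :
    e Y = 0 ∧ e Y' = 0 ∧ (Y'.L : ℤ) - Y.L = W'.L - W.L := by
  induction h with
  | refl W W' => exact ⟨hW, hW', rfl⟩
  | left x r h ih =>
    obtain ⟨h1, h2, h3⟩ := ih hW hW'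
    refine ⟨rfl, rfl, ?_⟩
    simp only [L_node, h1, h2] at *
    push_cast at *
    linarith
  | right l x h ih =>
    obtain ⟨h1, h2, h3⟩ := ih hW hW'
    refine ⟨rfl, rfl, ?_⟩
    simp only [L_node] at *
    push_cast at *
    linarith

end BT

open BT

/-- if `Y'` is obtained from `Y` by a single chain rotation (direct or
inverse), then `|L_{Y'} − L_Y| ≤ 1`. -/
theorem cstep_L_change_le_one (Y Y' : BT Unit) (h : CStep Y Y') :
    |(Y'.L : ℤ) - (Y.L : ℤ)| ≤ 1 := by
  have key : ∃ d : ℤ, |d| ≤ 1 ∧ (Y'.L : ℤ) - Y.L = d := by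
    rcases h with (⟨A, w, U, V, lv, hs, hc⟩ | ⟨A, w, U, V, rv, hs, hc⟩) |
      (⟨A, w, B, X, X', hs, hc⟩ | ⟨B, w, A, X, X', hs, hc⟩)
    · obtain ⟨h1, h2, h3⟩ := spliceL_L hs
      obtain ⟨_, _, h6⟩ := ctx_L hc (by rfl) h2
      refine ⟨-(e lv : ℤ), ?_, ?_⟩
      · rw [abs_neg, abs_of_nonneg (by positivity)]
        exact_mod_cast e_le_one lv
      · rw [h6, L_node]; push_cast; linarith
    · obtain ⟨h1, h2, h3⟩ := spliceR_L hs
      obtain ⟨_, _, h6⟩ := ctx_L hc (by rfl) h2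
      refine ⟨(e rv : ℤ), ?_, ?_⟩
      · rw [abs_of_nonneg (by positivity)]
        exact_mod_cast e_le_one rv
      · rw [h6, L_node, h1]; push_cast; linarith
    · obtain ⟨h1, h2, h3⟩ := ichainL_L hs
      obtain ⟨_, _, h6⟩ := ctx_L hc h1 (by rfl)
      refine ⟨(e B : ℤ), ?_, ?_⟩
      · rw [abs_of_nonneg (by positivity)]
        exact_mod_cast e_le_one B
      · rw [h6, L_node]; push_cast; linarith
    · obtain ⟨h1, h2, h3⟩ := ichainR_L hs
      obtain ⟨_, _, h6⟩ := ctx_L hc h1 (by rfl)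
      refine ⟨-(e B : ℤ), ?_, ?_⟩
      · rw [abs_neg, abs_of_nonneg (by positivity)]
        exact_mod_cast e_le_one B
      · rw [h6, L_node, h2]; push_cast; linarith
  obtain ⟨d, hd, he⟩ := key
  rw [he]; exact hd
end
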